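/- arXiv:0705.4309 — 2 statements merged into one kernel-verified Lean document; each statement's English description precedes it below -/
import Mathlib

section
/- Fix d,r∈ℕ and p∈[1,∞]. Let Φ=(φ^1,…,φ^r) with each φ^i continuous and ‖φ^i‖_{W^1}<∞, and let C=(c^1,…,c^r)∈(ℓ^p(ℤ^d))^{(r)}. Then for every x∈ℝ^d the series f(x) = ∑_{k∈ℤ^d}∑_{i=1}^r c^i(k)φ^i(x−k) converges absolutely, and the function f so defined is continuous on ℝ^d with ‖f‖_{W^p}<∞; that is, V^p(Φ) ⊂ W₀^p. -/
open MeasureTheory ENNReal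

noncomputable section

abbrev Euc (d : ℕ) := EuclideanSpace ℝ (Fin d)

/-- Embedding of `ℤ^d` into `ℝ^d`. -/
def zemb {d : ℕ} (k : Fin d → ℤ) : Euc d := WithLp.toLp 2 (fun i => (k i : ℝ))

/-- `ess sup_{x ∈ [0,1]^d} |f(x+k)|`, valued in `ℝ≥0∞`. -/
def cubeSup {d : ℕ} (f : Euc d → ℂ) (k : Fin d → ℤ) : ℝ≥0∞ :=
  essSup (fun x => (‖f (x + zemb k)‖₊ : ℝ≥0∞))
    (volume.restrict {x : Euc d | ∀ i, x i ∈ Set.Icc (0:ℝ) 1})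

/-- The Wiener amalgam norm `‖f‖_{W^p}`. -/
def WNorm {d : ℕ} (p : ℝ≥0∞) (f : Euc d → ℂ) : ℝ≥0∞ :=
  if p = ∞ then ⨆ k : Fin d → ℤ, cubeSup f k
  else (∑' k : Fin d → ℤ, cubeSup f k ^ p.toReal) ^ (1 / p.toReal)

/-- Membership in `W₀^1`: continuous with finite `W^1` norm. -/
def MemW01 {d : ℕ} (f : Euc d → ℂ) : Prop := Continuous f ∧ WNorm 1 f < ∞

/-- `(W^1)^{(r)}` norm of a vector of functions. -/
def WNormVec {d r : ℕ} (Φ : Fin r → Euc d → ℂ) : ℝ≥0∞ := ∑ i, WNorm 1 (Φ i)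

/-- the `ℓ^p` norm of a family of complex numbers, valued in `ℝ≥0∞`. -/
def lpNorm {ι : Type*} (p : ℝ≥0∞) (c : ι → ℂ) : ℝ≥0∞ :=
  if p = ∞ then ⨆ j, (‖c j‖₊ : ℝ≥0∞)
  else (∑' j, (‖c j‖₊ : ℝ≥0∞) ^ p.toReal) ^ (1 / p.toReal)

/-- The `(ℓ^p(ℤ^d))^{(r)}` norm `‖C‖ = ∑_i ‖c^i‖_{ℓ^p}`. -/
def vlpNorm {d r : ℕ} (p : ℝ≥0∞) (C : Fin r → (Fin d → ℤ) → ℂ) : ℝ≥0∞ :=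
  ∑ i, lpNorm p (C i)

/-- `f_C = ∑_{k ∈ ℤ^d} ∑_i c^i(k) φ^i(· - k)`. -/
def genFun {d r : ℕ} (Φ : Fin r → Euc d → ℂ) (C : Fin r → (Fin d → ℤ) → ℂ)
    (x : Euc d) : ℂ :=
  ∑' k : Fin d → ℤ, ∑ i, C i k * Φ i (x - zemb k)

/-- Integral of a complex-valued function against a finite complex Borel measure,
via the Jordan decompositions of the real and imaginary parts. -/
def cInt {d : ℕ} (μ : ComplexMeasure (Euc d)) (f : Euc d → ℂ) : ℂ :=
  ((∫ x, f x ∂(ComplexMeasure.re μ).toJordanDecomposition.posPart) -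
    (∫ x, f x ∂(ComplexMeasure.re μ).toJordanDecomposition.negPart)) +
  Complex.I * ((∫ x, f x ∂(ComplexMeasure.im μ).toJordanDecomposition.posPart) -
    (∫ x, f x ∂(ComplexMeasure.im μ).toJordanDecomposition.negPart))

/-- The convolution `(φ ∗ μ)(x) = ∫ φ(x - y) dμ(y)`. -/
def mconv {d : ℕ} (μ : ComplexMeasure (Euc d)) (φ : Euc d → ℂ) (x : Euc d) : ℂ :=
  cInt μ (fun y => φ (x - y))

/-- The total variation norm `|μ|(ℝ^d)` of a finite complex Borel measure, as the
supremum of `∑ ‖μ(S_i)‖` over finite disjoint families of measurable sets. -/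
def cmNorm {d : ℕ} (μ : ComplexMeasure (Euc d)) : ℝ≥0∞ :=
  ⨆ (n : ℕ) (S : Fin n → Set (Euc d)) (_ : ∀ i, MeasurableSet (S i))
    (_ : Pairwise (Function.onFun Disjoint S)), ∑ i, (‖μ (S i)‖₊ : ℝ≥0∞)

/-- norm of a vector of complex measures. -/
def cmNormVec {d t : ℕ} (μ : Fin t → ComplexMeasure (Euc d)) : ℝ≥0∞ :=
  ∑ l, cmNorm (μ l)

/-- The Riesz condition with explicit constants. -/
def RieszWith {d r : ℕ} (p : ℝ≥0∞) (Φ : Fin r → Euc d → ℂ) (m M : ℝ) : Prop :=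
  0 < m ∧ m ≤ M ∧ ∀ C : Fin r → (Fin d → ℤ) → ℂ, vlpNorm p C < ∞ →
    ENNReal.ofReal m * vlpNorm p C ≤ eLpNorm (genFun Φ C) p volume ∧
    eLpNorm (genFun Φ C) p volume ≤ ENNReal.ofReal M * vlpNorm p C

/-- The Riesz (unconditional basis) condition for `p`. -/
def RieszCond {d r : ℕ} (p : ℝ≥0∞) (Φ : Fin r → Euc d → ℂ) : Prop :=
  ∃ m M : ℝ, RieszWith p Φ m M

/-- `X` is a `μ⃗`-sampling set for `V^p(Φ)`. -/
def SamplingSet {d r t : ℕ} {J : Type*} (p : ℝ≥0∞) (Φ : Fin r → Euc d → ℂ)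
    (μ : Fin t → ComplexMeasure (Euc d)) (X : J → Euc d) : Prop :=
  ∃ A B : ℝ, 0 < A ∧ A ≤ B ∧ ∀ C : Fin r → (Fin d → ℤ) → ℂ, vlpNorm p C < ∞ →
    ENNReal.ofReal A * eLpNorm (genFun Φ C) p volume ≤
      ∑ l, lpNorm p (fun j => mconv (μ l) (genFun Φ C) (X j)) ∧
    ∑ l, lpNorm p (fun j => mconv (μ l) (genFun Φ C) (X j)) ≤
      ENNReal.ofReal B * eLpNorm (genFun Φ C) p volume

/-- `X` is separated with constant `δ`. -/
def SeparatedWith {d : ℕ} {J : Type*} (X : J → Euc d) (δ : ℝ) : Prop :=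
  ∀ i j : J, i ≠ j → δ ≤ dist (X i) (X j)

def SeparatedSet {d : ℕ} {J : Type*} (X : J → Euc d) : Prop :=
  ∃ δ : ℝ, 0 < δ ∧ SeparatedWith X δ

/-- Membership in `M_s(ℝ^d)`: `∫ (1+|x|)^s d|μ| < ∞`, expressed via the Jordan
decompositions of the real and imaginary parts. -/
def MemMs {d : ℕ} (s : ℝ) (μ : ComplexMeasure (Euc d)) : Prop :=
  (∫⁻ x, ENNReal.ofReal ((1 + ‖x‖) ^ s) ∂(ComplexMeasure.re μ).toJordanDecomposition.posPart < ∞) ∧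
  (∫⁻ x, ENNReal.ofReal ((1 + ‖x‖) ^ s) ∂(ComplexMeasure.re μ).toJordanDecomposition.negPart < ∞) ∧
  (∫⁻ x, ENNReal.ofReal ((1 + ‖x‖) ^ s) ∂(ComplexMeasure.im μ).toJordanDecomposition.posPart < ∞) ∧
  (∫⁻ x, ENNReal.ofReal ((1 + ‖x‖) ^ s) ∂(ComplexMeasure.im μ).toJordanDecomposition.negPart < ∞)

/-- `Φ ∈ W_s`: an `s`-localized Riesz generator. -/
def MemWs {d r : ℕ} (s : ℝ) (Φ : Fin r → Euc d → ℂ) : Prop :=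
  (∀ i, MemW01 (Φ i)) ∧ RieszCond 2 Φ ∧
    ∀ i, ∃ C0 : ℝ, 0 < C0 ∧ ∀ x : Euc d, ‖Φ i x‖ ≤ C0 * (1 + ‖x‖) ^ (-s)

end

/-!
On the cube `m + [0,1]^d` the `k`-th term `c^i(k) φ^i(x - k)` is bounded by
`|c^i(k)| b^i(m - k)`, where `b^i(k)` is the essential supremum of `|φ^i|` on `k + [0,1]^d`
(continuity of `φ^i` turns the essential supremum into a pointwise bound). Thus on that cube the
series is dominated by `∑ i, (|c^i| ∗ b^i)(m)`, with `b^i ∈ ℓ^1` because `φ^i ∈ W^1` and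
`|c^i| ∈ ℓ^∞` because `c^i ∈ ℓ^p`. This gives absolute convergence, and, since a neighbourhood of
any point meets finitely many cubes, locally uniform convergence and hence continuity. Finally
`‖f‖_{W^p} ≤ ‖∑ i, |c^i| ∗ b^i‖_{ℓ^p}`, which is finite by Young's inequality
`‖a ∗ b‖_{ℓ^p} ≤ ‖a‖_{ℓ^p} ‖b‖_{ℓ^1}`.
-/

open Filter Topology

namespace ENNReal

variable {ι : Type*}

theorem tsum_mul_le_weight_mul_Lp {p : ℝ} (hp : 1 ≤ p) (w f : ι → ℝ≥0∞) :
    ∑' i, w i * f i ≤ (∑' i, w i) ^ (1 - p⁻¹) * (∑' i, w i * f i ^ p) ^ p⁻¹ := by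
  have hp₁ : 0 ≤ 1 - p⁻¹ := sub_nonneg.2 (inv_le_one_of_one_le₀ hp)
  rw [ENNReal.tsum_eq_iSup_sum]
  refine iSup_le fun s => (inner_le_weight_mul_Lp_of_nonneg s hp w f).trans ?_
  gcongr <;> exact ENNReal.sum_le_tsum s

end ENNReal

section DiscreteConvolution

variable {G : Type*} [AddCommGroup G]

noncomputable def discreteConv (a b : G → ℝ≥0∞) (n : G) : ℝ≥0∞ := ∑' k, a k * b (n - k)

theorem tsum_sub_left {M : Type*} [AddCommMonoid M] [TopologicalSpace M] (b : G → M) (n : G) :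
    ∑' k, b (n - k) = ∑' k, b k :=
  (Equiv.subLeft n).tsum_eq b

theorem tsum_discreteConv (a b : G → ℝ≥0∞) :
    ∑' n, discreteConv a b n = (∑' k, a k) * ∑' k, b k := by
  simp_rw [discreteConv]
  rw [ENNReal.tsum_comm, ← ENNReal.tsum_mul_right]
  refine tsum_congr fun k => ?_
  rw [ENNReal.tsum_mul_left, ← (Equiv.subRight k).tsum_eq b]
  rfl

theorem discreteConv_le_mul_tsum {a : G → ℝ≥0∞} {L : ℝ≥0∞} (ha : ∀ k, a k ≤ L)
    (b : G → ℝ≥0∞) (n : G) : discreteConv a b n ≤ L * ∑' k, b k := by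
  rw [← tsum_sub_left b n, ← ENNReal.tsum_mul_left]
  exact ENNReal.tsum_le_tsum fun k => mul_le_mul_left (ha k) _

/-- The weighted Hölder inequality with the weights `b (n - ·)`. -/
theorem discreteConv_rpow_le {p : ℝ} (hp : 1 ≤ p) (a b : G → ℝ≥0∞) (n : G) :
    discreteConv a b n ^ p ≤ (∑' k, b k) ^ (p - 1) * discreteConv (fun k => a k ^ p) b n := by
  have hp₀ : 0 < p := by linarith
  have hHolder := ENNReal.tsum_mul_le_weight_mul_Lp hp (fun k => b (n - k)) a
  simp_rw [tsum_sub_left] at hHolder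
  calc discreteConv a b n ^ p
      ≤ ((∑' k, b k) ^ (1 - p⁻¹) * (∑' k, b (n - k) * a k ^ p) ^ p⁻¹) ^ p :=
        ENNReal.rpow_le_rpow (by simpa only [discreteConv, mul_comm (a _)] using hHolder) hp₀.le
    _ = (∑' k, b k) ^ (p - 1) * discreteConv (fun k => a k ^ p) b n := by
        rw [ENNReal.mul_rpow_of_nonneg _ _ hp₀.le, ← ENNReal.rpow_mul, ← ENNReal.rpow_mul,
          inv_mul_cancel₀ hp₀.ne', ENNReal.rpow_one, sub_mul, one_mul, inv_mul_cancel₀ hp₀.ne',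
          discreteConv]
        simp_rw [mul_comm (b _)]

theorem tsum_discreteConv_rpow_le {p : ℝ} (hp : 1 ≤ p) (a b : G → ℝ≥0∞) :
    ∑' n, discreteConv a b n ^ p ≤ (∑' k, a k ^ p) * (∑' k, b k) ^ p := by
  calc ∑' n, discreteConv a b n ^ p
      ≤ ∑' n, (∑' k, b k) ^ (p - 1) * discreteConv (fun k => a k ^ p) b n :=
        ENNReal.tsum_le_tsum fun n => discreteConv_rpow_le hp a b n
    _ = (∑' k, a k ^ p) * (∑' k, b k) ^ p := by
        rw [ENNReal.tsum_mul_left, tsum_discreteConv, mul_left_comm]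
        congr 1
        conv_rhs => rw [← sub_add_cancel p 1,
          ENNReal.rpow_add_of_nonneg _ _ (by linarith) zero_le_one, ENNReal.rpow_one]

end DiscreteConvolution

section Amalgam

variable {d : ℕ}

def unitCube (d : ℕ) : Set (Euc d) := {x | ∀ i, x i ∈ Set.Icc (0 : ℝ) 1}

theorem isClosed_unitCube : IsClosed (unitCube d) := by
  rw [unitCube, Set.ofPred_forall]
  exact isClosed_iInter fun i => isClosed_Icc.preimage (PiLp.continuous_apply 2 _ i)

theorem convex_unitCube : Convex ℝ (unitCube d) := fun x hx y hy a b ha hb hab i => by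
  obtain ⟨hx₀, hx₁⟩ := hx i
  obtain ⟨hy₀, hy₁⟩ := hy i
  simp only [PiLp.add_apply, PiLp.smul_apply, smul_eq_mul]
  constructor <;> nlinarith

theorem interior_unitCube_nonempty : (interior (unitCube d)).Nonempty := by
  let openCube : Set (Euc d) := {x | ∀ i, x i ∈ Set.Ioo (0 : ℝ) 1}
  have hopen : IsOpen openCube := by
    simp only [openCube, Set.ofPred_forall]
    exact isOpen_iInter_of_finite fun i => isOpen_Ioo.preimage (PiLp.continuous_apply 2 _ i)
  refine ⟨WithLp.toLp 2 fun _ => 1 / 2, interior_maximal (fun x hx i => ?_) hopen fun i => ?_⟩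
  · exact Set.Ioo_subset_Icc_self (hx i)
  · norm_num

theorem unitCube_subset_closure_interior : unitCube d ⊆ closure (interior (unitCube d)) := by
  rw [convex_unitCube.closure_interior_eq_closure_of_nonempty_interior interior_unitCube_nonempty]
  exact subset_closure

theorem sub_zemb_floor_mem_unitCube (x : Euc d) : x - zemb (fun j => ⌊x j⌋) ∈ unitCube d :=
  fun j => by
    simp only [zemb, PiLp.sub_apply]
    constructor <;> linarith [Int.floor_le (x j), Int.lt_floor_add_one (x j)]

theorem zemb_sub (m k : Fin d → ℤ) : zemb (m - k) = zemb m - zemb k := by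
  ext i
  simp [zemb]

theorem exists_finset_eventually_sub_zemb_mem_unitCube (x₀ : Euc d) :
    ∃ F : Finset (Fin d → ℤ), ∀ᶠ x in 𝓝 x₀, ∃ m ∈ F, x - zemb m ∈ unitCube d := by
  refine ⟨Fintype.piFinset fun j => Finset.Icc (⌊x₀ j⌋ - 1) (⌊x₀ j⌋ + 1),
    Filter.mem_of_superset (Metric.ball_mem_nhds x₀ one_pos) fun x hx => ?_⟩
  refine ⟨fun j => ⌊x j⌋, Fintype.mem_piFinset.2 fun j => ?_, sub_zemb_floor_mem_unitCube x⟩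
  have hj : dist (x j) (x₀ j) < 1 := (PiLp.dist_apply_le x x₀ j).trans_lt hx
  rw [Real.dist_eq, abs_lt] at hj
  rw [Finset.mem_Icc, ← Int.floor_sub_one, ← Int.floor_add_one]
  exact ⟨Int.floor_mono (by linarith), Int.floor_mono (by linarith)⟩

/-- `cubeSup` ignores null sets, but the cube is the closure of its interior, which is open. -/
theorem enorm_le_cubeSup {f : Euc d → ℂ} (hf : Continuous f) {x : Euc d} {k : Fin d → ℤ}
    (hx : x - zemb k ∈ unitCube d) : ‖f x‖ₑ ≤ cubeSup f k := by
  let g : Euc d → ℝ≥0∞ := fun y => ‖f (y + zemb k)‖ₑ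
  have hg : Continuous g := by fun_prop
  have hae : g =ᵐ[volume.restrict (unitCube d)] fun y => min (g y) (cubeSup f k) := by
    filter_upwards [ENNReal.ae_le_essSup g] with y hy using (min_eq_left hy).symm
  have hx' := Measure.eqOn_of_ae_eq hae hg.continuousOn (hg.min continuous_const).continuousOn
    unitCube_subset_closure_interior hx
  simp only [g, sub_add_cancel] at hx'
  exact hx' ▸ min_le_right _ _

theorem cubeSup_le_of_forall_le {f : Euc d → ℂ} {k : Fin d → ℤ} {B : ℝ≥0∞}
    (h : ∀ x, x - zemb k ∈ unitCube d → ‖f x‖ₑ ≤ B) : cubeSup f k ≤ B := by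
  refine essSup_le_of_ae_le _ ?_
  filter_upwards [ae_restrict_mem isClosed_unitCube.measurableSet] with y hy
  exact h (y + zemb k) (by rwa [add_sub_cancel_right])

theorem wNorm_one (f : Euc d → ℂ) : WNorm 1 f = ∑' k, cubeSup f k := by
  simp [WNorm]

theorem wNorm_lt_top_of_tsum_rpow_lt_top {p : ℝ≥0∞} (hp : p ≠ ∞) {f : Euc d → ℂ}
    (h : ∑' k, cubeSup f k ^ p.toReal < ∞) : WNorm p f < ∞ := by
  rw [WNorm, if_neg hp]
  exact ENNReal.rpow_lt_top_of_nonneg (by positivity) h.ne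

end Amalgam

section SequenceNorm

variable {ι : Type*} {p : ℝ≥0∞}

theorem enorm_le_lpNorm (hp : p ≠ 0) (c : ι → ℂ) (j : ι) : ‖c j‖ₑ ≤ lpNorm p c := by
  unfold _root_.lpNorm
  split_ifs with h
  · exact le_iSup (fun j => (‖c j‖₊ : ℝ≥0∞)) j
  · have ht : 0 < p.toReal := ENNReal.toReal_pos hp h
    calc ‖c j‖ₑ = (‖c j‖ₑ ^ p.toReal) ^ (1 / p.toReal) := by
          rw [← ENNReal.rpow_mul, mul_one_div_cancel ht.ne', ENNReal.rpow_one]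
      _ ≤ _ := ENNReal.rpow_le_rpow (ENNReal.le_tsum (f := fun j => ‖c j‖ₑ ^ p.toReal) j)
          (by positivity)

theorem tsum_enorm_rpow_lt_top_of_lpNorm_lt_top (hp₀ : p ≠ 0) (hp : p ≠ ∞) {c : ι → ℂ}
    (h : lpNorm p c < ∞) : ∑' j, ‖c j‖ₑ ^ p.toReal < ∞ := by
  rw [_root_.lpNorm, if_neg hp] at h
  exact (ENNReal.rpow_lt_top_iff_of_pos (by simp [ENNReal.toReal_pos hp₀ hp])).1 h

end SequenceNorm

theorem continuous_tsum_of_locally_enorm_le {α β F : Type*} [TopologicalSpace β]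
    [NormedAddCommGroup F] [CompleteSpace F] {f : α → β → F} (hf : ∀ i, Continuous (f i))
    (h : ∀ x, ∃ s ∈ 𝓝 x, ∃ u : α → ℝ≥0∞, ∑' i, u i ≠ ∞ ∧ ∀ i, ∀ y ∈ s, ‖f i y‖ₑ ≤ u i) :
    Continuous fun y => ∑' i, f i y := by
  refine continuous_iff_continuousAt.2 fun x => ?_
  obtain ⟨s, hs, u, hu, hfu⟩ := h x
  refine (continuousOn_tsum (fun i => (hf i).continuousOn) (ENNReal.summable_toReal hu)
    fun i y hy => ?_).continuousAt hs
  rw [← toReal_enorm]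
  exact ENNReal.toReal_mono (ne_top_of_le_ne_top hu (ENNReal.le_tsum i)) (hfu i y hy)

noncomputable def amalgamMajorant {d r : ℕ} (Φ : Fin r → Euc d → ℂ)
    (C : Fin r → (Fin d → ℤ) → ℂ) (m : Fin d → ℤ) : ℝ≥0∞ :=
  ∑ i, discreteConv (fun k => ‖C i k‖ₑ) (cubeSup (Φ i)) m

section GeneratingFunction

variable {d r : ℕ} {Φ : Fin r → Euc d → ℂ} {C : Fin r → (Fin d → ℤ) → ℂ}

theorem enorm_mul_le_cubeSup {φ : Euc d → ℂ} (hφ : Continuous φ) {x : Euc d} {m : Fin d → ℤ}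
    (hx : x - zemb m ∈ unitCube d) (c : ℂ) (k : Fin d → ℤ) :
    ‖c * φ (x - zemb k)‖ₑ ≤ ‖c‖ₑ * cubeSup φ (m - k) := by
  rw [enorm_mul]
  gcongr
  refine enorm_le_cubeSup hφ ?_
  rwa [zemb_sub, sub_sub_sub_cancel_right]

theorem enorm_sum_mul_le (hΦ : ∀ i, Continuous (Φ i)) {x : Euc d} {m : Fin d → ℤ}
    (hx : x - zemb m ∈ unitCube d) (k : Fin d → ℤ) :
    ‖∑ i, C i k * Φ i (x - zemb k)‖ₑ ≤ ∑ i, ‖C i k‖ₑ * cubeSup (Φ i) (m - k) :=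
  (enorm_sum_le _ _).trans (Finset.sum_le_sum fun i _ => enorm_mul_le_cubeSup (hΦ i) hx _ k)

theorem tsum_enorm_mul_le_amalgamMajorant (hΦ : ∀ i, Continuous (Φ i)) {x : Euc d}
    {m : Fin d → ℤ} (hx : x - zemb m ∈ unitCube d) :
    ∑' q : (Fin d → ℤ) × Fin r, ‖C q.2 q.1 * Φ q.2 (x - zemb q.1)‖ₑ ≤ amalgamMajorant Φ C m := by
  calc ∑' q : (Fin d → ℤ) × Fin r, ‖C q.2 q.1 * Φ q.2 (x - zemb q.1)‖ₑ
      ≤ ∑' q : (Fin d → ℤ) × Fin r, ‖C q.2 q.1‖ₑ * cubeSup (Φ q.2) (m - q.1) :=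
        ENNReal.tsum_le_tsum fun q => enorm_mul_le_cubeSup (hΦ q.2) hx _ q.1
    _ = amalgamMajorant Φ C m := by
        rw [ENNReal.tsum_prod (f := fun k i => ‖C i k‖ₑ * cubeSup (Φ i) (m - k)),
          ENNReal.tsum_comm, tsum_fintype]
        rfl

theorem cubeSup_genFun_le (hΦ : ∀ i, Continuous (Φ i)) (m : Fin d → ℤ) :
    cubeSup (genFun Φ C) m ≤ amalgamMajorant Φ C m := by
  refine cubeSup_le_of_forall_le fun x hx => ?_
  calc ‖genFun Φ C x‖ₑ ≤ ∑' k, ‖∑ i, C i k * Φ i (x - zemb k)‖ₑ := enorm_tsum_le_tsum_enorm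
    _ ≤ ∑' k, ∑ i, ‖C i k‖ₑ * cubeSup (Φ i) (m - k) :=
        ENNReal.tsum_le_tsum (enorm_sum_mul_le hΦ hx)
    _ = amalgamMajorant Φ C m := by
        rw [Summable.tsum_finsetSum fun _ _ => ENNReal.summable]
        rfl

theorem summable_norm_mul_of_amalgamMajorant_ne_top (hΦ : ∀ i, Continuous (Φ i))
    (hfin : ∀ m, amalgamMajorant Φ C m ≠ ∞) (x : Euc d) :
    Summable fun q : (Fin d → ℤ) × Fin r => ‖C q.2 q.1 * Φ q.2 (x - zemb q.1)‖ := by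
  refine (ENNReal.summable_toReal (ne_top_of_le_ne_top (hfin _)
    (tsum_enorm_mul_le_amalgamMajorant hΦ (sub_zemb_floor_mem_unitCube x)))).congr fun q => ?_
  exact toReal_enorm _

theorem continuous_genFun_of_amalgamMajorant_ne_top (hΦ : ∀ i, Continuous (Φ i))
    (hfin : ∀ m, amalgamMajorant Φ C m ≠ ∞) : Continuous (genFun Φ C) := by
  refine continuous_tsum_of_locally_enorm_le (fun k => by fun_prop) fun x₀ => ?_
  obtain ⟨F, hF⟩ := exists_finset_eventually_sub_zemb_mem_unitCube x₀
  refine ⟨_, hF, fun k => ∑ m ∈ F, ∑ i, ‖C i k‖ₑ * cubeSup (Φ i) (m - k), ?_, ?_⟩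
  · rw [Summable.tsum_finsetSum fun _ _ => ENNReal.summable]
    refine (ENNReal.sum_lt_top.2 fun m _ => ?_).ne
    rw [Summable.tsum_finsetSum fun _ _ => ENNReal.summable]
    exact (hfin m).lt_top
  · rintro k x ⟨m, hmF, hx⟩
    exact (enorm_sum_mul_le hΦ hx k).trans
      (Finset.single_le_sum (f := fun m => ∑ i, ‖C i k‖ₑ * cubeSup (Φ i) (m - k))
        (fun _ _ => zero_le) hmF)

theorem amalgamMajorant_le {p : ℝ≥0∞} (hp : p ≠ 0) (m : Fin d → ℤ) :
    amalgamMajorant Φ C m ≤ ∑ i, lpNorm p (C i) * WNorm 1 (Φ i) := by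
  refine Finset.sum_le_sum fun i _ => ?_
  rw [wNorm_one]
  exact discreteConv_le_mul_tsum (enorm_le_lpNorm hp (C i)) _ m

theorem tsum_amalgamMajorant_rpow_lt_top {t : ℝ} (ht : 1 ≤ t)
    (hC : ∀ i, ∑' k, ‖C i k‖ₑ ^ t < ∞) (hΦ : ∀ i, WNorm 1 (Φ i) < ∞) :
    ∑' m, amalgamMajorant Φ C m ^ t < ∞ := by
  have hpow : ∀ m, amalgamMajorant Φ C m ^ t ≤
      (r : ℝ≥0∞) ^ (t - 1) * ∑ i, discreteConv (fun k => ‖C i k‖ₑ) (cubeSup (Φ i)) m ^ t := by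
    intro m
    simpa [amalgamMajorant] using ENNReal.rpow_sum_le_const_mul_sum_rpow (s := Finset.univ)
      (f := fun i => discreteConv (fun k => ‖C i k‖ₑ) (cubeSup (Φ i)) m) ht
  refine (ENNReal.tsum_le_tsum hpow).trans_lt ?_
  rw [ENNReal.tsum_mul_left, Summable.tsum_finsetSum fun _ _ => ENNReal.summable]
  refine ENNReal.mul_lt_top (ENNReal.rpow_lt_top_of_nonneg (by linarith) (by simp))
    (ENNReal.sum_lt_top.2 fun i _ => (tsum_discreteConv_rpow_le ht _ _).trans_lt ?_)
  rw [← wNorm_one]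
  exact ENNReal.mul_lt_top (hC i) (ENNReal.rpow_lt_top_of_nonneg (by linarith) (hΦ i).ne)

end GeneratingFunction

open MeasureTheory ENNReal in
/-- part of Proposition 4.2: for generators in `W₀¹` and coefficients in
`(ℓ^p)^{(r)}`, the generating series converges absolutely at every point, and defines a
continuous function with finite `W^p` norm; i.e. `V^p(Φ) ⊂ W₀^p`. -/
theorem genFun_absolutely_convergent_continuous_Wp
    (d r : ℕ) (p : ℝ≥0∞) (hp : 1 ≤ p)
    (Φ : Fin r → Euc d → ℂ) (hΦ : ∀ i, Continuous (Φ i) ∧ WNorm 1 (Φ i) < ∞)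
    (C : Fin r → (Fin d → ℤ) → ℂ) (hC : vlpNorm p C < ∞) :
    (∀ x : Euc d,
        Summable (fun q : (Fin d → ℤ) × Fin r => ‖C q.2 q.1 * Φ q.2 (x - zemb q.1)‖)) ∧
      Continuous (genFun Φ C) ∧ WNorm p (genFun Φ C) < ∞ := by
  have hp₀ : p ≠ 0 := (zero_lt_one.trans_le hp).ne'
  have hΦc i := (hΦ i).1
  have hCi : ∀ i, lpNorm p (C i) < ∞ := fun i => ENNReal.sum_lt_top.1 hC i (Finset.mem_univ i)
  have hbound_lt_top : ∑ i, lpNorm p (C i) * WNorm 1 (Φ i) < ∞ :=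
    ENNReal.sum_lt_top.2 fun i _ => ENNReal.mul_lt_top (hCi i) (hΦ i).2
  have hfin m : amalgamMajorant Φ C m ≠ ∞ :=
    ((amalgamMajorant_le hp₀ m).trans_lt hbound_lt_top).ne
  refine ⟨summable_norm_mul_of_amalgamMajorant_ne_top hΦc hfin,
    continuous_genFun_of_amalgamMajorant_ne_top hΦc hfin, ?_⟩
  by_cases hp_top : p = ∞
  · rw [WNorm, if_pos hp_top]
    exact (iSup_le fun m => (cubeSup_genFun_le hΦc m).trans (amalgamMajorant_le hp₀ m)).trans_lt
      hbound_lt_top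
  · have ht : 1 ≤ p.toReal := by simpa using ENNReal.toReal_mono hp_top hp
    have hCt i := tsum_enorm_rpow_lt_top_of_lpNorm_lt_top hp₀ hp_top (hCi i)
    refine wNorm_lt_top_of_tsum_rpow_lt_top hp_top ?_
    calc ∑' m, cubeSup (genFun Φ C) m ^ p.toReal ≤ ∑' m, amalgamMajorant Φ C m ^ p.toReal :=
          ENNReal.tsum_le_tsum fun m => ENNReal.rpow_le_rpow (cubeSup_genFun_le hΦc m) (by linarith)
      _ < ∞ := tsum_amalgamMajorant_rpow_lt_top ht hCt fun i => (hΦ i).2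
end

section
/- Fix d∈ℕ and p∈[1,∞). Let f:ℝ^d→ℂ be continuous with ‖f‖_{W^p}<∞, and let X={x_j : j∈J}⊂ℝ^d be a countable set that is separated with constant δ>0. Then (∑_{j∈J}|f(x_j)|^p)^{1/p} ≤ N‖f‖_{W^p}, where N = (√d/δ + 1)^{d/p}. -/
/-!
Cut `ℝ^d` into the unit cubes `k + [0,1)^d`, and each of them into `n^d` subcubes of side `1/n`,
where `n = ⌊√d/δ⌋ + 1`. A subcube has diameter `√d/n < δ`, so it contains at most one point of
the `δ`-separated family, and a unit cube contains at most `n^d` of them. Since the closed cube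
`k + [0,1]^d` is the closure of its interior, a continuous `f` is bounded at each of its points by
its essential supremum over it, hence
`∑_j |f(x_j)|^p ≤ n^d ∑_k (ess sup_{k+[0,1]^d} |f|)^p`, and `n ≤ √d/δ + 1`.
-/

open MeasureTheory ENNReal

open Set

theorem le_essSup_restrict_of_mem_closure_interior {α β : Type*} [TopologicalSpace α]
    [MeasurableSpace α] [OpensMeasurableSpace α] {μ : Measure α} [μ.IsOpenPosMeasure]
    [CompleteLinearOrder β] [TopologicalSpace β] [FirstCountableTopology β] [OrderTopology β]
    {g : α → β} (hg : Continuous g) {s : Set α} {x : α} (hx : x ∈ closure (interior s)) :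
    g x ≤ essSup g (μ.restrict s) := by
  by_contra! hlt
  have hU : IsOpen (g ⁻¹' Ioi (essSup g (μ.restrict s))) := isOpen_Ioi.preimage hg
  have hmeet := mem_closure_iff.1 hx _ hU hlt
  have hzero : μ.restrict s (g ⁻¹' Ioi (essSup g (μ.restrict s))) = 0 := meas_essSup_lt
  rw [Measure.restrict_apply hU.measurableSet] at hzero
  exact ((hU.inter isOpen_interior).measure_pos μ hmeet).ne'
    (measure_mono_null (inter_subset_inter_right _ interior_subset) hzero)

theorem EuclideanSpace.closure_interior_unitCube (ι : Type*) [Fintype ι] :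
    closure (interior {x : EuclideanSpace ℝ ι | ∀ i, x i ∈ Icc (0 : ℝ) 1}) =
      {x : EuclideanSpace ℝ ι | ∀ i, x i ∈ Icc (0 : ℝ) 1} := by
  have hcube : {x : EuclideanSpace ℝ ι | ∀ i, x i ∈ Icc (0 : ℝ) 1} =
      (EuclideanSpace.equiv ι ℝ).toHomeomorph ⁻¹' univ.pi fun _ => Icc 0 1 := by
    ext x; simp only [mem_ofPred_eq, mem_preimage, mem_univ_pi]; rfl
  rw [hcube, ← Homeomorph.preimage_interior, ← Homeomorph.preimage_closure,
    interior_pi_set finite_univ, closure_pi_set]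
  simp

theorem EuclideanSpace.dist_le_sqrt_card_mul {ι : Type*} [Fintype ι]
    {x y : EuclideanSpace ℝ ι} {r : ℝ} (hr : 0 ≤ r) (h : ∀ i, dist (x i) (y i) ≤ r) :
    dist x y ≤ √(Fintype.card ι) * r := by
  rw [EuclideanSpace.dist_eq, ← Real.sqrt_sq hr, ← Real.sqrt_mul (Nat.cast_nonneg _)]
  gcongr
  calc ∑ i, dist (x i) (y i) ^ 2 ≤ ∑ _i : ι, r ^ 2 := by gcongr with i; exact h i
    _ = _ := by simp

theorem abs_sub_lt_one_div_of_floor_mul_eq {n a b : ℝ} (hn : 0 < n) (h : ⌊n * a⌋ = ⌊n * b⌋) :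
    |a - b| < 1 / n := by
  have := Int.abs_sub_lt_one_of_floor_eq_floor h
  rw [← mul_sub, abs_mul, abs_of_pos hn] at this
  rw [lt_div_iff₀ hn]
  linarith

theorem ENNReal.tsum_comp_le_mul_tsum {J ι : Type*} (K : J → ι) (g : ι → ℝ≥0∞) {m : ℕ}
    (hK : ∀ k, (K ⁻¹' {k}).encard ≤ m) : ∑' j, g (K j) ≤ m * ∑' k, g k := by
  rw [← ENNReal.tsum_fiberwise _ K, ← ENNReal.tsum_mul_left]
  refine ENNReal.tsum_le_tsum fun k => ?_
  calc ∑' j : K ⁻¹' {k}, g (K j) = ∑' _ : K ⁻¹' {k}, g k :=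
        tsum_congr fun j => congrArg g j.2
    _ = (K ⁻¹' {k}).encard * g k := ENNReal.tsum_const _
    _ ≤ m * g k := by gcongr; exact_mod_cast hK k

theorem nnnorm_le_cubeSup {d : ℕ} {f : Euc d → ℂ} (hf : Continuous f) (x : Euc d) :
    (‖f x‖₊ : ℝ≥0∞) ≤ cubeSup f (fun i => ⌊x i⌋) := by
  have hx : x - zemb (fun i => ⌊x i⌋) ∈ {y : Euc d | ∀ i, y i ∈ Icc (0 : ℝ) 1} := fun i => by
    simpa [zemb] using (Int.fract_lt_one (x i)).le
  have := le_essSup_restrict_of_mem_closure_interior (μ := volume)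
    (by fun_prop : Continuous fun y => (‖f (y + zemb fun i => ⌊x i⌋)‖₊ : ℝ≥0∞))
    ((EuclideanSpace.closure_interior_unitCube (Fin d)).symm ▸ hx)
  rwa [sub_add_cancel] at this

theorem SeparatedWith.encard_floor_fiber_le {d : ℕ} {J : Type*} {X : J → Euc d} {δ : ℝ}
    (hsep : SeparatedWith X δ) {n : ℕ} (hn : √d < n * δ) (k : Fin d → ℤ) :
    ((fun j i => ⌊X j i⌋) ⁻¹' {k}).encard ≤ n ^ d := by
  have hn0 : (0 : ℝ) < n := Nat.cast_pos.2 <| Nat.pos_of_ne_zero <| by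
    rintro rfl
    simpa using (Real.sqrt_nonneg d).trans_lt hn
  -- `σ j` indexes the subcube of side `1/n` of the unit cube `⌊X j⌋ + [0,1)^d` containing `X j`.
  let σ : J → Fin d → Fin n := fun j i =>
    ⟨⌊n * Int.fract (X j i)⌋₊, (Nat.floor_lt (by positivity)).2 <|
      mul_lt_of_lt_one_right hn0 (Int.fract_lt_one _)⟩
  have hinj : InjOn σ ((fun j i => ⌊X j i⌋) ⁻¹' {k}) := by
    intro a ha b hb hab
    by_contra hne
    have hcoord : ∀ i, dist (X a i) (X b i) ≤ 1 / n := fun i => by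
      have hfl : ⌊X a i⌋ = ⌊X b i⌋ := congrFun (ha.trans hb.symm) i
      have hsub : X a i - X b i = Int.fract (X a i) - Int.fract (X b i) := by
        rw [Int.fract, Int.fract, hfl]; ring
      have hσ : ⌊n * Int.fract (X a i)⌋ = ⌊n * Int.fract (X b i)⌋ := by
        rw [← Int.natCast_floor_eq_floor (by positivity),
          ← Int.natCast_floor_eq_floor (by positivity)]
        exact congrArg (fun c : Fin d → Fin n => ((c i : ℕ) : ℤ)) hab
      rw [Real.dist_eq, hsub]
      exact (abs_sub_lt_one_div_of_floor_mul_eq hn0 hσ).le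
    have := (hsep a b hne).trans (EuclideanSpace.dist_le_sqrt_card_mul (by positivity) hcoord)
    rw [Fintype.card_fin, mul_one_div, le_div_iff₀ hn0] at this
    linarith
  calc _ ≤ (univ : Set (Fin d → Fin n)).encard :=
        encard_le_encard_of_injOn (mapsTo_univ _ _) hinj
    _ = n ^ d := by simp

open MeasureTheory ENNReal in
theorem sample_lp_bound_general
    (d : ℕ) (p : ℝ≥0∞)
    (f : Euc d → ℂ) (hfc : Continuous f)
    (J : Type) (X : J → Euc d) (δ : ℝ) (hδ : 0 < δ)
    (hsep : SeparatedWith X δ) :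
    lpNorm p (fun j => f (X j)) ≤
      ENNReal.ofReal ((Real.sqrt d / δ + 1) ^ ((d : ℝ) / p.toReal)) * WNorm p f := by
  have hpoint j := nnnorm_le_cubeSup hfc (X j)
  by_cases hp : p = ∞
  · -- `∞.toReal = 0`, so the constant is `ofReal (_ ^ 0) = 1`.
    subst hp
    simp only [_root_.lpNorm, WNorm, ↓reduceIte, toReal_top, _root_.div_zero, Real.rpow_zero,
      ofReal_one, one_mul]
    exact iSup_le fun j => (hpoint j).trans (le_iSup _ _)
  set q := p.toReal
  set n := ⌊√d / δ⌋₊ + 1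
  have hn : √d < n * δ := by
    rw [← div_lt_iff₀ hδ]
    exact_mod_cast Nat.lt_floor_add_one (√d / δ)
  have hn_le : (n : ℝ) ≤ √d / δ + 1 := by
    push_cast [n]
    gcongr
    exact Nat.floor_le (by positivity)
  have hsum : ∑' j, (‖f (X j)‖₊ : ℝ≥0∞) ^ q ≤ (n ^ d : ℕ) * ∑' k, cubeSup f k ^ q :=
    calc _ ≤ ∑' j, cubeSup f (fun i => ⌊X j i⌋) ^ q :=
          ENNReal.tsum_le_tsum fun j => rpow_le_rpow (hpoint j) toReal_nonneg
      _ ≤ _ := ENNReal.tsum_comp_le_mul_tsum _ _ (hsep.encard_floor_fiber_le hn)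
  have hconst : ((n ^ d : ℕ) : ℝ≥0∞) ^ (1 / q) ≤ ENNReal.ofReal ((√d / δ + 1) ^ (d / q)) := by
    rw [← ofReal_natCast, ofReal_rpow_of_nonneg (by positivity) (by positivity),
      Nat.cast_pow, ← Real.rpow_natCast, ← Real.rpow_mul (by positivity), mul_one_div]
    gcongr
  rw [_root_.lpNorm, WNorm, if_neg hp, if_neg hp]
  calc _ ≤ (((n ^ d : ℕ) : ℝ≥0∞) * ∑' k, cubeSup f k ^ q) ^ (1 / q) :=
        rpow_le_rpow hsum (by positivity)
    _ = ((n ^ d : ℕ) : ℝ≥0∞) ^ (1 / q) * (∑' k, cubeSup f k ^ q) ^ (1 / q) :=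
        mul_rpow_of_nonneg _ _ (by positivity)
    _ ≤ _ := by gcongr

open MeasureTheory ENNReal in
/-- inequality (4.2.5): sampling a continuous `W^p` function on a
separated set: `‖f(X)‖_{ℓ^p} ≤ N ‖f‖_{W^p}` with `N = (√d/δ + 1)^{d/p}`. -/
theorem sample_lp_bound
    (d : ℕ) (p : ℝ≥0∞) (hp : 1 ≤ p) (hp' : p ≠ ∞)
    (f : Euc d → ℂ) (hfc : Continuous f) (hfW : WNorm p f < ∞)
    (J : Type) [Countable J] (X : J → Euc d) (δ : ℝ) (hδ : 0 < δ)
    (hsep : SeparatedWith X δ) :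
    lpNorm p (fun j => f (X j)) ≤
      ENNReal.ofReal ((Real.sqrt d / δ + 1) ^ ((d : ℝ) / p.toReal)) * WNorm p f :=
  sample_lp_bound_general d p f hfc J X δ hδ hsep
end
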